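/- Let Ω ⊂ ℝ² be a bounded open set and fix d ≥ diam Ω. Let (μ_n)_{n∈ℕ} be a sequence of nonnegative finite measures on Ω with sup_n ‖μ_n‖_{M(Ω)} < ∞, and suppose there are b ∈ Ω, r > 0 with B_r(b) ⊂ Ω, ε > 0 and m ∈ ℕ such that μ_n(B_r(b)) ≤ 2π − ε for every n ≥ m. Then there exist p > 1 and C > 0 such that for every n ≥ m, ‖e^{2 N(μ_n)}‖_{L^p(B_{r/2}(b))} ≤ C, where N(μ_n) denotes the Newtonian potential of μ_n. -/

import Mathlib

open MeasureTheory Real Filter Topology Metric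

noncomputable section

/-- The plane `ℝ²`. -/
abbrev E2 : Type := EuclideanSpace ℝ (Fin 2)

/-- The pointwise Laplacian of a function `φ : ℝ² → ℝ`. -/
def lapl (φ : E2 → ℝ) (x : E2) : ℝ :=
  ∑ i : Fin 2, iteratedFDeriv ℝ 2 φ x
    ![EuclideanSpace.single i (1 : ℝ), EuclideanSpace.single i (1 : ℝ)]

/-- Test functions on `Ω`: smooth functions compactly supported in `Ω`. -/
def IsTest (Ω : Set E2) (φ : E2 → ℝ) : Prop :=
  ContDiff ℝ (⊤ : ℕ∞) φ ∧ HasCompactSupport φ ∧ tsupport φ ⊆ Ω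

/-- `u ∈ W^{1,1}_0(Ω)`: the extension of `u` by zero admits an integrable weak derivative
vanishing outside `Ω`; this encodes the homogeneous Dirichlet boundary condition. -/
def MemW11Zero (Ω : Set E2) (u : E2 → ℝ) : Prop :=
  Integrable (Ω.indicator u) volume ∧
  ∃ du : E2 → E2 →L[ℝ] ℝ, Integrable du volume ∧
    (∀ᵐ x ∂volume, x ∉ Ω → du x = 0) ∧
    ∀ φ : E2 → ℝ, ContDiff ℝ (⊤ : ℕ∞) φ → HasCompactSupport φ →
      (∫ x, Ω.indicator u x • fderiv ℝ φ x) = - ∫ x, φ x • du x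

/-- Convergence `u_n → u` in `L¹(Ω)`. -/
def TendstoL1 (Ω : Set E2) (us : ℕ → E2 → ℝ) (u : E2 → ℝ) : Prop :=
  Tendsto (fun n => ∫ x in Ω, |us n x - u x|) atTop (𝓝 0)

/-- Weak-* convergence of measures in `M(Ω)`: testing against continuous functions on the
closure of `Ω` vanishing on the boundary of `Ω`. -/
def WeakStarTo (Ω : Set E2) (μs : ℕ → Measure E2) (μ : Measure E2) : Prop :=
  ∀ ζ : E2 → ℝ, ContinuousOn ζ (closure Ω) → (∀ x ∈ frontier Ω, ζ x = 0) →
    Tendsto (fun n => ∫ x, ζ x ∂(μs n)) atTop (𝓝 (∫ x, ζ x ∂μ))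

/-- `u` is a solution of the scalar Chern-Simons problem `-Δu + e^u(e^u - 1) = μ` in `Ω`,
`u = 0` on `∂Ω`. -/
def IsScalarCSSol (Ω : Set E2) (μ : Measure E2) (u : E2 → ℝ) : Prop :=
  MemW11Zero Ω u ∧
  IntegrableOn (fun x => exp (u x) * (exp (u x) - 1)) Ω volume ∧
  ∀ φ : E2 → ℝ, IsTest Ω φ →
    (- ∫ x in Ω, u x * lapl φ x)
      + (∫ x in Ω, exp (u x) * (exp (u x) - 1) * φ x) = ∫ y, φ y ∂μ

/-- `(u, v)` is a solution of the Chern-Simons system with datum `(μ, ν)` and zero Dirichlet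
boundary conditions. -/
def IsCSSysSol (Ω : Set E2) (μ ν : Measure E2) (u v : E2 → ℝ) : Prop :=
  MemW11Zero Ω u ∧ MemW11Zero Ω v ∧
  IntegrableOn (fun x => exp (v x) * (exp (u x) - 1)) Ω volume ∧
  IntegrableOn (fun x => exp (u x) * (exp (v x) - 1)) Ω volume ∧
  (∀ φ : E2 → ℝ, IsTest Ω φ →
    (- ∫ x in Ω, u x * lapl φ x)
      + (∫ x in Ω, exp (v x) * (exp (u x) - 1) * φ x) = ∫ y, φ y ∂μ) ∧
  (∀ φ : E2 → ℝ, IsTest Ω φ →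
    (- ∫ x in Ω, v x * lapl φ x)
      + (∫ x in Ω, exp (u x) * (exp (v x) - 1) * φ x) = ∫ y, φ y ∂ν)

/-- `μs` is the largest measure less than or equal to `μ` all of whose atoms in `Ω` have mass
at most `c`. -/
def IsSharp (Ω : Set E2) (μ μs : Measure E2) (c : ℝ) : Prop :=
  μs ≤ μ ∧ (∀ x ∈ Ω, μs {x} ≤ ENNReal.ofReal c) ∧
  ∀ σ : Measure E2, σ ≤ μ → (∀ x ∈ Ω, σ {x} ≤ ENNReal.ofReal c) → σ ≤ μs

/-- The measure on `Ω` with density `f` with respect to the Lebesgue measure. -/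
def densMeas (Ω : Set E2) (f : E2 → ℝ) : Measure E2 :=
  (volume.restrict Ω).withDensity fun x => ENNReal.ofReal (f x)

/-- The Newtonian potential of the measure `μ`. -/
def newton (d : ℝ) (μ : Measure E2) (x : E2) : ℝ :=
  (1 / (2 * π)) * ∫ y, Real.log (d / dist x y) ∂μ


section Aux
open Set ENNReal Module

lemma jensen_exp (ν : Measure E2) [IsFiniteMeasure ν] (hν : ν ≠ 0) (f : E2 → ℝ)
    (hf : Integrable f ν) :
    ENNReal.ofReal (Real.exp ((ν Set.univ).toReal⁻¹ * ∫ y, f y ∂ν)) ≤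
      (ν Set.univ)⁻¹ * ∫⁻ y, ENNReal.ofReal (Real.exp (f y)) ∂ν := by
  have hc0 : ν Set.univ ≠ 0 := by simpa [Measure.measure_univ_eq_zero] using hν
  have hcT : ν Set.univ ≠ ∞ := measure_ne_top ν _
  by_cases hgi : Integrable (fun y => Real.exp (f y)) ν
  · have : NeZero ν := ⟨hν⟩
    have h := (convexOn_exp).map_average_le continuous_exp.continuousOn isClosed_univ
      (Eventually.of_forall fun x => mem_univ _) hf hgi
    rw [average_eq, average_eq] at h
    have h2 : ENNReal.ofReal (Real.exp ((ν Set.univ).toReal⁻¹ * ∫ y, f y ∂ν)) ≤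
        ENNReal.ofReal ((ν Set.univ).toReal⁻¹ • ∫ y, Real.exp (f y) ∂ν) := by
      exact ENNReal.ofReal_le_ofReal (by simpa [smul_eq_mul, Measure.real] using h)
    refine h2.trans ?_
    rw [smul_eq_mul, ENNReal.ofReal_mul (by positivity),
      ← ofReal_integral_eq_lintegral_ofReal hgi (Eventually.of_forall fun x => (exp_pos _).le)]
    gcongr
    rw [ENNReal.ofReal_inv_of_pos (ENNReal.toReal_pos hc0 hcT), ENNReal.ofReal_toReal hcT]
  · have hmeas : AEStronglyMeasurable (fun y => Real.exp (f y)) ν :=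
      (Real.continuous_exp.comp_aestronglyMeasurable hf.1)
    have : ∫⁻ y, ENNReal.ofReal (Real.exp (f y)) ∂ν = ∞ := by
      by_contra h
      exact hgi ⟨hmeas, by
        simpa [HasFiniteIntegral, Real.enorm_eq_ofReal (exp_pos _).le] using lt_top_iff_ne_top.2 h⟩
    rw [this, ENNReal.mul_top (by simpa using hcT)]
    exact le_top

lemma radial_fin {β R : ℝ} (hβ0 : 0 < β) (hβ2 : β < 2) :
    ∫⁻ z in ball (0:E2) R, ENNReal.ofReal (‖z‖ ^ (-β)) < ∞ := by
  have hfr : (finrank ℝ E2) = 2 := finrank_euclideanSpace_fin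
  have hmeas : Measurable fun z : E2 => ‖z‖ ^ (-β) := by fun_prop
  set μR : Measure E2 := volume.restrict (ball (0:E2) R) with hμR
  have hnn : ∀ z : E2, 0 ≤ ‖z‖ ^ (-β) := fun z => rpow_nonneg (norm_nonneg _) _
  rw [lintegral_eq_lintegral_meas_le μR (Eventually.of_forall hnn) hmeas.aemeasurable]
  have key : ∀ t ∈ Ioi (1:ℝ), μR {a : E2 | t ≤ ‖a‖ ^ (-β)} ≤
      ENNReal.ofReal (t ^ (-(2/β))) * volume (ball (0:E2) 1) := by
    intro t ht
    have ht1 : (1:ℝ) < t := ht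
    have ht0 : (0:ℝ) < t := lt_trans one_pos ht1
    have hsub : {a : E2 | t ≤ ‖a‖ ^ (-β)} ⊆ closedBall (0:E2) (t ^ (-β⁻¹)) := by
      intro a ha
      simp only [mem_setOf_eq] at ha
      have hna : a ≠ 0 := by
        rintro rfl
        rw [norm_zero, Real.zero_rpow (by simpa using hβ0.ne')] at ha
        linarith
      have hn0 : (0:ℝ) < ‖a‖ := norm_pos_iff.2 hna
      rw [mem_closedBall_zero_iff]
      have h1 : (‖a‖ ^ (-β)) ^ (-β⁻¹) ≤ t ^ (-β⁻¹) :=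
        Real.rpow_le_rpow_of_nonpos ht0 ha (neg_nonpos.2 (inv_nonneg.2 hβ0.le))
      rwa [← Real.rpow_mul hn0.le, neg_mul_neg, mul_inv_cancel₀ hβ0.ne',
        Real.rpow_one] at h1
    calc μR {a : E2 | t ≤ ‖a‖ ^ (-β)} ≤ volume (closedBall (0:E2) (t ^ (-β⁻¹))) :=
          le_trans (Measure.restrict_apply_le _ _) (measure_mono hsub)
      _ = ENNReal.ofReal ((t ^ (-β⁻¹)) ^ finrank ℝ E2) * volume (ball (0:E2) 1) :=
          Measure.addHaar_closedBall _ _ (by positivity)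
      _ = ENNReal.ofReal (t ^ (-(2/β))) * volume (ball (0:E2) 1) := by
          rw [hfr, ← Real.rpow_natCast (t ^ (-β⁻¹)) 2, ← Real.rpow_mul ht0.le,
            show -β⁻¹ * (2:ℕ) = -(2/β) by push_cast; ring]
  calc ∫⁻ t in Ioi 0, μR {a : E2 | t ≤ ‖a‖ ^ (-β)}
      ≤ ∫⁻ t in Ioc 0 1 ∪ Ioi 1, μR {a : E2 | t ≤ ‖a‖ ^ (-β)} :=
        lintegral_mono_set Ioi_subset_Ioc_union_Ioi
    _ ≤ (∫⁻ t in Ioc (0:ℝ) 1, μR {a : E2 | t ≤ ‖a‖ ^ (-β)}) +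
        ∫⁻ t in Ioi (1:ℝ), μR {a : E2 | t ≤ ‖a‖ ^ (-β)} := lintegral_union_le _ _ _
    _ < ∞ := by
        refine ENNReal.add_lt_top.2 ⟨?_, ?_⟩
        · calc ∫⁻ t in Ioc (0:ℝ) 1, μR {a : E2 | t ≤ ‖a‖ ^ (-β)}
              ≤ ∫⁻ _ in Ioc (0:ℝ) 1, volume (ball (0:E2) R) :=
              lintegral_mono fun t => (measure_mono (subset_univ _)).trans_eq
                (Measure.restrict_apply_univ _)
            _ < ∞ := by
              rw [setLIntegral_const]
              exact ENNReal.mul_lt_top measure_ball_lt_top (by simp [Real.volume_Ioc])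
        · calc ∫⁻ t in Ioi (1:ℝ), μR {a : E2 | t ≤ ‖a‖ ^ (-β)}
              ≤ ∫⁻ t in Ioi (1:ℝ), ENNReal.ofReal (t ^ (-(2/β))) * volume (ball (0:E2) 1) :=
              setLIntegral_mono' measurableSet_Ioi key
            _ = (∫⁻ t in Ioi (1:ℝ), ENNReal.ofReal (t ^ (-(2/β)))) * volume (ball (0:E2) 1) := by
              rw [lintegral_mul_const' _ _ measure_ball_lt_top.ne]
            _ < ∞ := by
              refine ENNReal.mul_lt_top ?_ measure_ball_lt_top
              have hint : IntegrableOn (fun t : ℝ => t ^ (-(2/β))) (Ioi 1) :=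
                integrableOn_Ioi_rpow_of_lt (by rw [neg_lt_neg_iff]; exact (one_lt_div hβ0).2 hβ2) one_pos
              have := hint.2
              rw [HasFiniteIntegral] at this
              refine lt_of_le_of_lt (lintegral_mono fun t => ?_) this
              exact Real.ofReal_le_enorm _


-- translation lemma
lemma translate_lem (d β r' : ℝ) (y : E2) :
    ∫⁻ x in ball y r', ENNReal.ofReal (d ^ β * dist x y ^ (-β))
      = ∫⁻ z in ball (0:E2) r', ENNReal.ofReal (d ^ β * ‖z‖ ^ (-β)) := by
  have himg : (fun z : E2 => z + y) '' ball (0:E2) r' = ball y r' := by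
    ext x
    simp only [mem_image, mem_ball, dist_eq_norm]
    constructor
    · rintro ⟨z, h, rfl⟩; simpa [add_sub_cancel_right] using h
    · intro h; exact ⟨x - y, by simpa using h, sub_add_cancel x y⟩
  have := (measurePreserving_add_right (volume : Measure E2) y).setLIntegral_comp_emb
    (MeasurableEquiv.addRight y).measurableEmbedding
    (fun x => ENNReal.ofReal (d ^ β * dist x y ^ (-β))) (ball (0:E2) r')
  rw [himg] at this
  rw [← this]
  refine setLIntegral_congr_fun measurableSet_ball (fun z _ => ?_)
  congr 2
  rw [dist_eq_norm, add_sub_cancel_right]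

-- inner x-integral bound
lemma inner_bound {d β r : ℝ} (hd0 : 0 < d) (hβ0 : 0 < β) (hr : 0 < r)
    {b y : E2} (hy : y ∈ ball b r) :
    ∫⁻ x in ball b (r/2), ENNReal.ofReal (Real.exp (β * Real.log (d / dist x y)))
      ≤ ∫⁻ z in ball (0:E2) (2*r), ENNReal.ofReal (d ^ β * ‖z‖ ^ (-β)) := by
  have h1 : ∫⁻ x in ball b (r/2), ENNReal.ofReal (Real.exp (β * Real.log (d / dist x y)))
      = ∫⁻ x in ball b (r/2), ENNReal.ofReal (d ^ β * dist x y ^ (-β)) := by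
    apply lintegral_congr_ae
    have hae : ∀ᵐ x ∂(volume.restrict (ball b (r/2))), x ≠ y := by
      refine ae_restrict_of_ae ?_
      rw [ae_iff]
      refine measure_mono_null (fun x hx => ?_) (measure_singleton y)
      simpa using hx
    filter_upwards [hae] with x hx
    have hdxy : 0 < dist x y := dist_pos.2 hx
    congr 1
    rw [show rexp (β * Real.log (d / dist x y)) = (d / dist x y) ^ β by
        rw [Real.rpow_def_of_pos (div_pos hd0 hdxy), mul_comm],
      Real.div_rpow hd0.le hdxy.le, Real.rpow_neg hdxy.le, div_eq_mul_inv]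
  rw [h1]
  have hsub : ball b (r/2) ⊆ ball y (2*r) := fun x hx => by
    rw [mem_ball] at *
    have := dist_triangle x b y
    rw [dist_comm b y] at *
    linarith [mem_ball.1 hy]
  calc _ ≤ ∫⁻ x in ball y (2*r), ENNReal.ofReal (d ^ β * dist x y ^ (-β)) :=
        lintegral_mono' (Measure.restrict_mono hsub le_rfl) le_rfl
    _ = _ := translate_lem d β (2*r) y

lemma core_bound (Ω : Set E2) (hΩo : IsOpen Ω) (hΩb : Bornology.IsBounded Ω)
    {d : ℝ} (hd : Metric.diam Ω ≤ d) (hd0 : 0 < d)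
    (μ : Measure E2) [IsFiniteMeasure μ] (hsupp : μ Ωᶜ = 0)
    {M' : ℝ} (hM'0 : 0 ≤ M') (hM : μ Set.univ ≤ ENNReal.ofReal M')
    {b : E2} {r : ℝ} (hr : 0 < r) (hball : ball b r ⊆ Ω)
    {s p β L A : ℝ} (hs0 : 0 < s) (hp0 : 0 < p)
    (hβdef : β = p * s / π) (hLdef : L = max (Real.log (2*d/r)) 0)
    (hAdef : A = Real.exp (p * M' * L / π))
    (hmass : (μ (ball b r)).toReal ≤ s) :
    ∫⁻ x in ball b (r/2), ENNReal.ofReal (Real.exp (2 * newton d μ x * p))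
      ≤ ENNReal.ofReal A * (∫⁻ z in ball (0:E2) (2*r), ENNReal.ofReal (d ^ β * ‖z‖ ^ (-β)))
        + ENNReal.ofReal A * volume (ball b (r/2)) := by
  have hπ : (0:ℝ) < π := Real.pi_pos
  have hL0 : 0 ≤ L := hLdef ▸ le_max_right _ _
  have hA1 : 1 ≤ A := by
    rw [hAdef, show (1:ℝ) = Real.exp 0 from (Real.exp_zero).symm]
    exact Real.exp_le_exp.2 (by positivity)
  have hβ0 : 0 < β := by rw [hβdef]; positivity
  -- pointwise log facts
  have hlog_nonneg : ∀ x ∈ Ω, ∀ y ∈ Ω, 0 ≤ Real.log (d / dist x y) := by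
    intro x hx y hy
    rcases eq_or_lt_of_le (dist_nonneg : (0:ℝ) ≤ dist x y) with h0 | h0
    · rw [← h0]; simp
    · apply Real.log_nonneg
      rw [le_div_iff₀ h0, one_mul]
      exact (dist_le_diam_of_mem hΩb hx hy).trans hd
  have hlog_le_L : ∀ x ∈ ball b (r/2), ∀ y ∉ ball b r,
      Real.log (d / dist x y) ≤ L := by
    intro x hx y hy
    have h1 : r ≤ dist y b := by simpa [mem_ball] using hy
    have h2 : dist x b < r/2 := mem_ball.1 hx
    have h3 : r/2 ≤ dist x y := by
      have := dist_triangle y x b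
      rw [dist_comm y x] at this
      linarith
    have h4 : d / dist x y ≤ 2*d/r := by
      rw [div_le_div_iff₀ (by linarith) hr]
      nlinarith [hd0.le]
    calc Real.log (d / dist x y) ≤ Real.log (2*d/r) :=
          Real.log_le_log (div_pos hd0 (by linarith)) h4
      _ ≤ L := hLdef ▸ le_max_left _ _
  have hballΩ : ball b (r/2) ⊆ Ω := (ball_subset_ball (by linarith)).trans hball
  have hflog_meas : ∀ x : E2, Measurable fun y : E2 => Real.log (d / dist x y) :=
    fun x => Real.measurable_log.comp
      (measurable_const.div (measurable_const.dist measurable_id))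
  have hμuniv : (μ Set.univ).toReal ≤ M' := by
    have := ENNReal.toReal_mono ENNReal.ofReal_ne_top hM
    rwa [ENNReal.toReal_ofReal hM'0] at this
  have haeΩ : ∀ᵐ y ∂μ, y ∈ Ω := by
    rw [ae_iff]
    exact hsupp
  set ν := μ.restrict (ball b r) with hν
  have hνc : ν Set.univ = μ (ball b r) := by rw [hν, Measure.restrict_apply_univ]
  have hcT : μ (ball b r) ≠ ∞ := measure_ne_top μ _
  set κ := ∫⁻ z in ball (0:E2) (2*r), ENNReal.ofReal (d ^ β * ‖z‖ ^ (-β)) with hκ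
  by_cases hc : μ (ball b r) = 0
  · -- no mass in the ball
    have hpt : ∀ x ∈ ball b (r/2),
        ENNReal.ofReal (Real.exp (2 * newton d μ x * p)) ≤ ENNReal.ofReal A := by
      intro x hx
      have haeL : ∀ᵐ y ∂μ, Real.log (d / dist x y) ≤ L := by
        have hnb : ∀ᵐ y ∂μ, y ∉ ball b r := by
          rw [ae_iff]
          simp only [not_not]
          exact hc
        filter_upwards [hnb] with y hy using hlog_le_L x hx y hy
      have hI : ∫ y, Real.log (d / dist x y) ∂μ ≤ M' * L := by
        by_cases hint : Integrable (fun y => Real.log (d / dist x y)) μ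
        · calc ∫ y, Real.log (d / dist x y) ∂μ ≤ ∫ _, L ∂μ :=
              integral_mono_ae hint (integrable_const L) haeL
            _ = (μ Set.univ).toReal * L := by rw [integral_const, smul_eq_mul]; rfl
            _ ≤ M' * L := by
              have := ENNReal.toReal_nonneg (a := μ Set.univ)
              nlinarith
        · rw [integral_undef hint]
          positivity
      apply ENNReal.ofReal_le_ofReal
      rw [hAdef]
      apply Real.exp_le_exp.2
      have h1 : newton d μ x ≤ (1/(2*π)) * (M'*L) := by
        rw [newton]
        exact mul_le_mul_of_nonneg_left hI (by positivity)
      have h2 := mul_le_mul_of_nonneg_right h1 hp0.le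
      have h3 : p*M'*L/π = 2*((1/(2*π))*(M'*L)*p) := by field_simp
      nlinarith
    calc ∫⁻ x in ball b (r/2), ENNReal.ofReal (Real.exp (2 * newton d μ x * p))
        ≤ ∫⁻ _ in ball b (r/2), ENNReal.ofReal A := by
          refine lintegral_mono_ae ?_
          filter_upwards [ae_restrict_mem measurableSet_ball] with x hx using hpt x hx
      _ = ENNReal.ofReal A * volume (ball b (r/2)) := by
          rw [setLIntegral_const]
      _ ≤ _ := le_add_self
  · -- positive mass in the ball
    have hν0 : ν ≠ 0 := by
      intro h
      rw [← hνc, h] at hc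
      simp at hc
    set a := (μ (ball b r)).toReal with ha
    have ha0 : 0 < a := ENNReal.toReal_pos hc hcT
    have haeνΩ : ∀ᵐ y ∂ν, y ∈ Ω := by
      rw [ae_iff]
      refine measure_mono_null (t := Ωᶜ) (fun z hz => hz) ?_
      rw [hν, Measure.restrict_apply (hΩo.measurableSet.compl)]
      exact measure_mono_null inter_subset_left hsupp
    have hpt : ∀ x ∈ ball b (r/2),
        ENNReal.ofReal (Real.exp (2 * newton d μ x * p)) ≤ ENNReal.ofReal A *
          ((μ (ball b r))⁻¹ *
            ∫⁻ y, ENNReal.ofReal (Real.exp (β * Real.log (d / dist x y))) ∂ν) := by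
      intro x hx
      have hxΩ := hballΩ hx
      have haeν_nonneg : ∀ᵐ y ∂ν, 0 ≤ Real.log (d / dist x y) := by
        filter_upwards [haeνΩ] with y hy using hlog_nonneg x hxΩ y hy
      have hFc : μ (ball b r) ≤
          ∫⁻ y, ENNReal.ofReal (Real.exp (β * Real.log (d / dist x y))) ∂ν := by
        calc μ (ball b r) = ∫⁻ _, 1 ∂ν := by rw [lintegral_one, hνc]
          _ ≤ _ := by
            refine lintegral_mono_ae ?_
            filter_upwards [haeν_nonneg] with y hy
            rw [show (1:ℝ≥0∞) = ENNReal.ofReal (Real.exp 0) by simp]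
            exact ENNReal.ofReal_le_ofReal (Real.exp_le_exp.2 (by positivity))
      by_cases hint : Integrable (fun y => Real.log (d / dist x y)) μ
      · have hintν : Integrable (fun y => Real.log (d / dist x y)) ν := hint.restrict
        have hI0 : 0 ≤ ∫ y, Real.log (d / dist x y) ∂ν := integral_nonneg_of_ae haeν_nonneg
        set I := ∫ y, Real.log (d / dist x y) ∂ν with hIdef
        have houter : ∫ y in (ball b r)ᶜ, Real.log (d / dist x y) ∂μ ≤ M' * L := by
          have haeL : ∀ᵐ y ∂(μ.restrict (ball b r)ᶜ), Real.log (d / dist x y) ≤ L := by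
            filter_upwards [ae_restrict_mem measurableSet_ball.compl] with y hy
            exact hlog_le_L x hx y hy
          calc ∫ y in (ball b r)ᶜ, Real.log (d / dist x y) ∂μ ≤ ∫ _ in (ball b r)ᶜ, L ∂μ :=
              integral_mono_ae hint.restrict (integrable_const L) haeL
            _ = (μ (ball b r)ᶜ).toReal * L := by
              rw [integral_const, smul_eq_mul, Measure.real, Measure.restrict_apply_univ]
            _ ≤ M' * L := by
              refine mul_le_mul_of_nonneg_right ?_ hL0
              exact le_trans (ENNReal.toReal_mono (measure_ne_top μ _)
                (measure_mono (subset_univ _))) hμuniv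
        have hsplit : ∫ y, Real.log (d / dist x y) ∂μ
            = I + ∫ y in (ball b r)ᶜ, Real.log (d / dist x y) ∂μ := by
          rw [hIdef, hν]
          exact (integral_add_compl measurableSet_ball hint).symm
        have hjen := jensen_exp ν hν0 (fun y => (p * a / π) * Real.log (d / dist x y))
          (hintν.const_mul _)
        rw [hνc] at hjen
        have harg1 : a⁻¹ * ∫ y, (p * a / π) * Real.log (d / dist x y) ∂ν = p/π * I := by
          rw [integral_const_mul, ← hIdef]
          field_simp
        have hmono : ∫⁻ y, ENNReal.ofReal (Real.exp ((p * a / π) * Real.log (d / dist x y))) ∂ν ≤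
            ∫⁻ y, ENNReal.ofReal (Real.exp (β * Real.log (d / dist x y))) ∂ν := by
          refine lintegral_mono_ae ?_
          filter_upwards [haeν_nonneg] with y hy
          refine ENNReal.ofReal_le_ofReal (Real.exp_le_exp.2 ?_)
          refine mul_le_mul_of_nonneg_right ?_ hy
          rw [hβdef]
          gcongr
        have hchain : Real.exp (2 * newton d μ x * p) ≤ A * Real.exp (p/π * I) := by
          have hEq : 2 * newton d μ x * p
              = p/π * I + p/π * (∫ y in (ball b r)ᶜ, Real.log (d / dist x y) ∂μ) := by
            rw [newton, hsplit]
            field_simp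
          rw [hEq, Real.exp_add, hAdef, mul_comm]
          refine mul_le_mul_of_nonneg_right (Real.exp_le_exp.2 ?_) (Real.exp_pos _).le
          calc p/π * (∫ y in (ball b r)ᶜ, Real.log (d / dist x y) ∂μ) ≤ p/π * (M'*L) :=
              mul_le_mul_of_nonneg_left houter (by positivity)
            _ = p * M' * L / π := by ring
        calc ENNReal.ofReal (Real.exp (2 * newton d μ x * p))
            ≤ ENNReal.ofReal (A * Real.exp (p/π * I)) := ENNReal.ofReal_le_ofReal hchain
          _ = ENNReal.ofReal A * ENNReal.ofReal (Real.exp (p/π * I)) :=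
            ENNReal.ofReal_mul (by positivity)
          _ ≤ _ := by
            refine mul_le_mul_right ?_ _
            calc ENNReal.ofReal (Real.exp (p/π * I))
                = ENNReal.ofReal (Real.exp (a⁻¹ * ∫ y, (p * a / π) * Real.log (d / dist x y) ∂ν)) := by
                  rw [harg1]
              _ ≤ (μ (ball b r))⁻¹ *
                  ∫⁻ y, ENNReal.ofReal (Real.exp ((p * a / π) * Real.log (d / dist x y))) ∂ν := hjen
              _ ≤ _ := mul_le_mul_right hmono _
      · have hnewton : newton d μ x = 0 := by
          rw [newton, integral_undef hint, mul_zero]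
        rw [hnewton]
        norm_num
        calc (1:ℝ≥0∞) = 1 * 1 := (one_mul 1).symm
          _ ≤ _ := by
            refine mul_le_mul' (ENNReal.one_le_ofReal.2 hA1) ?_
            rw [← ENNReal.inv_mul_cancel hc hcT]
            exact mul_le_mul_right hFc _
    have hKmeas : Measurable fun q : E2 × E2 =>
        ENNReal.ofReal (Real.exp (β * Real.log (d / dist q.1 q.2))) :=
      ENNReal.measurable_ofReal.comp (Real.measurable_exp.comp ((Real.measurable_log.comp
        (measurable_const.div measurable_dist)).const_mul β))
    have hswap : ∫⁻ x in ball b (r/2),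
          (∫⁻ y, ENNReal.ofReal (Real.exp (β * Real.log (d / dist x y))) ∂ν) ∂volume
        = ∫⁻ y, (∫⁻ x in ball b (r/2),
            ENNReal.ofReal (Real.exp (β * Real.log (d / dist x y))) ∂volume) ∂ν :=
      lintegral_lintegral_swap hKmeas.aemeasurable
    have hinner : ∫⁻ y, (∫⁻ x in ball b (r/2),
          ENNReal.ofReal (Real.exp (β * Real.log (d / dist x y))) ∂volume) ∂ν
        ≤ κ * μ (ball b r) := by
      calc _ ≤ ∫⁻ _, κ ∂ν := by
            refine lintegral_mono_ae ?_
            filter_upwards [ae_restrict_mem measurableSet_ball] with y hy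
            exact inner_bound hd0 hβ0 hr hy
        _ = κ * μ (ball b r) := by rw [lintegral_const, hνc]
    have hconst_ne : ENNReal.ofReal A * (μ (ball b r))⁻¹ ≠ ∞ := by
      refine ENNReal.mul_ne_top ENNReal.ofReal_ne_top ?_
      simpa using hc
    calc ∫⁻ x in ball b (r/2), ENNReal.ofReal (Real.exp (2 * newton d μ x * p))
        ≤ ∫⁻ x in ball b (r/2), ENNReal.ofReal A * ((μ (ball b r))⁻¹ *
            ∫⁻ y, ENNReal.ofReal (Real.exp (β * Real.log (d / dist x y))) ∂ν) ∂volume := by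
          refine lintegral_mono_ae ?_
          filter_upwards [ae_restrict_mem measurableSet_ball] with x hx using hpt x hx
      _ = ENNReal.ofReal A * (μ (ball b r))⁻¹ * ∫⁻ x in ball b (r/2),
            (∫⁻ y, ENNReal.ofReal (Real.exp (β * Real.log (d / dist x y))) ∂ν) ∂volume := by
          rw [← lintegral_const_mul' _ _ hconst_ne]
          simp only [mul_assoc]
      _ ≤ ENNReal.ofReal A * (μ (ball b r))⁻¹ * (κ * μ (ball b r)) := by
          rw [hswap]
          exact mul_le_mul_right hinner _
      _ = ENNReal.ofReal A * κ := by
          rw [mul_assoc, mul_comm κ (μ (ball b r)), ← mul_assoc (μ (ball b r))⁻¹,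
            ENNReal.inv_mul_cancel hc hcT, one_mul]
      _ ≤ _ := le_self_add

end Aux

open Set ENNReal Module in
theorem stmt11
    (Ω : Set E2) (hΩo : IsOpen Ω) (hΩb : Bornology.IsBounded Ω)
    (d : ℝ) (hd : Metric.diam Ω ≤ d)
    (μs : ℕ → Measure E2) (hfin : ∀ n, IsFiniteMeasure (μs n)) (hsupp : ∀ n, μs n Ωᶜ = 0)
    (M : ℝ) (hM : ∀ n, μs n Set.univ ≤ ENNReal.ofReal M)
    (b : E2) (hb : b ∈ Ω) (r : ℝ) (hr : 0 < r) (hball : ball b r ⊆ Ω)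
    (ε : ℝ) (hε : 0 < ε) (m : ℕ)
    (hmass : ∀ n ≥ m, μs n (ball b r) ≤ ENNReal.ofReal (2 * π - ε)) :
    ∃ p > 1, ∃ C > 0, ∀ n ≥ m,
      eLpNorm (fun x => exp (2 * newton d (μs n) x)) (ENNReal.ofReal p)
        (volume.restrict (ball b (r / 2))) ≤ ENNReal.ofReal C := by
  
  -- basic positivity facts
  have hπ : (0:ℝ) < π := Real.pi_pos
  have hd0 : 0 < d := by
    have hv : (b + EuclideanSpace.single (0 : Fin 2) (r/2)) ∈ Ω := by
      apply hball
      rw [mem_ball]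
      have : dist (b + EuclideanSpace.single (0 : Fin 2) (r/2)) b
          = ‖EuclideanSpace.single (0 : Fin 2) (r/2)‖ := by
        rw [dist_eq_norm, add_sub_cancel_left]
      rw [this, EuclideanSpace.norm_single, Real.norm_eq_abs, abs_of_pos (by linarith)]
      linarith
    have h1 : dist b (b + EuclideanSpace.single (0 : Fin 2) (r/2)) ≤ Metric.diam Ω :=
      dist_le_diam_of_mem hΩb hb hv
    have h2 : dist b (b + EuclideanSpace.single (0 : Fin 2) (r/2)) = r/2 := by
      rw [dist_eq_norm, show b - (b + EuclideanSpace.single (0 : Fin 2) (r/2))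
          = -(EuclideanSpace.single (0 : Fin 2) (r/2)) by abel, norm_neg,
        EuclideanSpace.norm_single, Real.norm_eq_abs, abs_of_pos (by linarith)]
    linarith
  set M' : ℝ := max M 0 with hM'def
  have hM'0 : 0 ≤ M' := le_max_right _ _
  set s : ℝ := max (2*π - ε) π with hsdef
  have hsπ : π ≤ s := le_max_right _ _
  have hs0 : 0 < s := lt_of_lt_of_le hπ hsπ
  have hs2π : s < 2*π := max_lt (by linarith) (by linarith)
  set p : ℝ := (2*π + s)/(2*s) with hpdef
  have hp1 : 1 < p := by
    rw [hpdef, lt_div_iff₀ (by positivity)]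
    linarith
  have hp0 : 0 < p := lt_trans one_pos hp1
  set β : ℝ := p * s / π with hβdef
  have hps : p * s = (2*π + s)/2 := by
    rw [hpdef]
    field_simp
  have hβ0 : 0 < β := by rw [hβdef]; positivity
  have hβ2 : β < 2 := by
    rw [hβdef, div_lt_iff₀ hπ, hps]
    linarith
  set L : ℝ := max (Real.log (2*d/r)) 0 with hLdef
  set A : ℝ := Real.exp (p * M' * L / π) with hAdef
  set κ : ℝ≥0∞ := ∫⁻ z in ball (0:E2) (2*r), ENNReal.ofReal (d ^ β * ‖z‖ ^ (-β)) with hκdef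
  have hκT : κ < ⊤ := by
    rw [hκdef]
    calc ∫⁻ z in ball (0:E2) (2*r), ENNReal.ofReal (d ^ β * ‖z‖ ^ (-β))
        = ∫⁻ z in ball (0:E2) (2*r), ENNReal.ofReal (d ^ β) * ENNReal.ofReal (‖z‖ ^ (-β)) := by
          refine lintegral_congr fun z => ?_
          rw [ENNReal.ofReal_mul (Real.rpow_nonneg hd0.le β)]
      _ = ENNReal.ofReal (d ^ β) * ∫⁻ z in ball (0:E2) (2*r), ENNReal.ofReal (‖z‖ ^ (-β)) :=
          lintegral_const_mul' _ _ ENNReal.ofReal_ne_top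
      _ < ⊤ := ENNReal.mul_lt_top ENNReal.ofReal_lt_top (radial_fin hβ0 hβ2)
  set B : ℝ≥0∞ := ENNReal.ofReal A * κ + ENNReal.ofReal A * volume (ball b (r/2)) with hBdef
  have hBT : B ≠ ⊤ := by
    rw [hBdef]
    exact (ENNReal.add_lt_top.2 ⟨ENNReal.mul_lt_top ENNReal.ofReal_lt_top hκT,
      ENNReal.mul_lt_top ENNReal.ofReal_lt_top measure_ball_lt_top⟩).ne
  -- the uniform lintegral bound
  have hn : ∀ n ≥ m, ∫⁻ x in ball b (r/2),
      ENNReal.ofReal (Real.exp (2 * newton d (μs n) x * p)) ≤ B := by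
    intro n hnm
    haveI := hfin n
    have hmass' : ((μs n) (ball b r)).toReal ≤ s := by
      refine le_trans (ENNReal.toReal_mono ENNReal.ofReal_ne_top (hmass n hnm)) ?_
      rcases le_total (2*π - ε) 0 with h | h
      · rw [ENNReal.ofReal_eq_zero.2 h]
        simpa using hs0.le
      · rw [ENNReal.toReal_ofReal h]
        exact le_max_left _ _
    have hM' : μs n Set.univ ≤ ENNReal.ofReal M' :=
      le_trans (hM n) (ENNReal.ofReal_le_ofReal (le_max_left _ _))
    exact core_bound Ω hΩo hΩb hd hd0 (μs n) (hsupp n) hM'0 hM' hr hball hs0 hp0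
      hβdef hLdef hAdef hmass'
  -- conclude via the eLpNorm computation
  refine ⟨p, hp1, (B+1).toReal, ?_, fun n hnm => ?_⟩
  · refine ENNReal.toReal_pos ?_ (by simp [hBT])
    simp
  have h1 : eLpNorm (fun x => exp (2 * newton d (μs n) x)) (ENNReal.ofReal p)
      (volume.restrict (ball b (r / 2)))
      = (∫⁻ x in ball b (r/2), ENNReal.ofReal (Real.exp (2 * newton d (μs n) x * p))) ^ (1/p) := by
    rw [eLpNorm_eq_lintegral_rpow_enorm_toReal (ENNReal.ofReal_pos.2 hp0).ne'
      (by simp), ENNReal.toReal_ofReal hp0.le]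
    congr 1
    refine lintegral_congr fun x => ?_
    rw [← ofReal_norm_eq_enorm, Real.norm_eq_abs, abs_of_pos (exp_pos _),
      ENNReal.ofReal_rpow_of_pos (exp_pos _), ← Real.exp_mul]
  rw [h1]
  have h2 : (∫⁻ x in ball b (r/2),
      ENNReal.ofReal (Real.exp (2 * newton d (μs n) x * p))) ^ (1/p) ≤ B + 1 := by
    have hle := hn n hnm
    rcases le_total (∫⁻ x in ball b (r/2),
        ENNReal.ofReal (Real.exp (2 * newton d (μs n) x * p))) 1 with h | h
    · calc _ ≤ (1:ℝ≥0∞) ^ (1/p) := ENNReal.rpow_le_rpow h (by positivity)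
        _ = 1 := ENNReal.one_rpow _
        _ ≤ B + 1 := le_add_self
    · calc _ ≤ (∫⁻ x in ball b (r/2),
            ENNReal.ofReal (Real.exp (2 * newton d (μs n) x * p))) ^ (1:ℝ) := by
            apply ENNReal.rpow_le_rpow_of_exponent_le h
            rw [div_le_one hp0]
            linarith
        _ ≤ B + 1 := by rw [ENNReal.rpow_one]; exact hle.trans le_self_add
  rwa [ENNReal.ofReal_toReal (by simp [hBT])]
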